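/- arXiv:2206.09580 — 2 statements merged into one kernel-verified Lean document; each statement's English description precedes it below -/
import Mathlib

section
/- Let q be a primitive m-th root of unity in K and set n = m if m is odd and n = m/2 if m is even. Then the elements u12^n, u21^n and u22^n are central in A_q(M₂). -/
noncomputable section

open FreeAlgebra MulOpposite

/-- The relations of the reflection equation algebra of rank 2:
`u11·u22 = u22·u11`, `u22·u12 = q²·u12·u22`, `u21·u22 = q²·u22·u21`,
`u11·u12 = u12·(u11 + (q^{−2}−1)·u22)`, `u21·u11 = (u11 + (q^{−2}−1)·u22)·u21`,
`u21·u12 − u12·u21 = (q^{−2}−1)·u22·(u22 − u11)`, where the generators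
`u11, u12, u21, u22` are the images of `0, 1, 2, 3 : Fin 4`. -/
inductive REArel {K : Type*} [Field K] (q : K) :
    FreeAlgebra K (Fin 4) → FreeAlgebra K (Fin 4) → Prop
  | r1 : REArel q (ι K (0 : Fin 4) * ι K (3 : Fin 4)) (ι K (3 : Fin 4) * ι K (0 : Fin 4))
  | r2 : REArel q (ι K (3 : Fin 4) * ι K (1 : Fin 4))
      (q ^ 2 • (ι K (1 : Fin 4) * ι K (3 : Fin 4)))
  | r3 : REArel q (ι K (2 : Fin 4) * ι K (3 : Fin 4))
      (q ^ 2 • (ι K (3 : Fin 4) * ι K (2 : Fin 4)))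
  | r4 : REArel q (ι K (0 : Fin 4) * ι K (1 : Fin 4))
      (ι K (1 : Fin 4) * (ι K (0 : Fin 4) + (q⁻¹ ^ 2 - 1) • ι K (3 : Fin 4)))
  | r5 : REArel q (ι K (2 : Fin 4) * ι K (0 : Fin 4))
      ((ι K (0 : Fin 4) + (q⁻¹ ^ 2 - 1) • ι K (3 : Fin 4)) * ι K (2 : Fin 4))
  | r6 : REArel q (ι K (2 : Fin 4) * ι K (1 : Fin 4))
      (ι K (1 : Fin 4) * ι K (2 : Fin 4) +
        (q⁻¹ ^ 2 - 1) • (ι K (3 : Fin 4) * (ι K (3 : Fin 4) - ι K (0 : Fin 4))))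

/-- The reflection equation algebra `A_q(M₂)` of rank 2: the quotient of the free
`K`-algebra on four generators by the two-sided ideal generated by the relations above. -/
abbrev REA {K : Type*} [Field K] (q : K) := RingQuot (REArel q)

variable {K : Type*} [Field K]

/-- The generator `u11` of `A_q(M₂)`. -/
def u11 (q : K) : REA q := RingQuot.mkAlgHom K (REArel q) (ι K (0 : Fin 4))
/-- The generator `u12` of `A_q(M₂)`. -/
def u12 (q : K) : REA q := RingQuot.mkAlgHom K (REArel q) (ι K (1 : Fin 4))
/-- The generator `u21` of `A_q(M₂)`. -/
def u21 (q : K) : REA q := RingQuot.mkAlgHom K (REArel q) (ι K (2 : Fin 4))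
/-- The generator `u22` of `A_q(M₂)`. -/
def u22 (q : K) : REA q := RingQuot.mkAlgHom K (REArel q) (ι K (3 : Fin 4))

/-! Since `u22·u12 = q²·u12·u22`, the generators `u11` and `u21` move past a power `u12^k` at the
cost of correction terms in `u22²` and `u22·u11`, whose coefficients have closed forms divisible by
`1 - q^{2k}`; they vanish for `k = n` because `q^{2n} = 1`. The relations are symmetric under
`u12 ↔ u21` read in the opposite algebra, which transfers everything to `u21^n`, and `u22^n` only
needs the `q²`-commutation relations. -/

section Relations

variable {A : Type*} [Ring A] [Algebra K A]

theorem mul_pow_eq_smul_pow_mul {r : K} {x y : A} (h : x * y = r • (y * x)) (k : ℕ) :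
    x * y ^ k = r ^ k • (y ^ k * x) := by
  induction k with
  | zero => simp
  | succ k ih =>
    rw [pow_succ, ← mul_assoc, ih, smul_mul_assoc, mul_assoc, h, mul_smul_comm, smul_smul,
      ← mul_assoc, ← pow_succ, ← pow_succ]

theorem commute_pow_right_of_mul_eq_smul {r : K} {x y : A} (h : x * y = r • (y * x)) {n : ℕ}
    (hn : r ^ n = 1) : Commute x (y ^ n) := by
  rw [Commute, SemiconjBy, mul_pow_eq_smul_pow_mul h, hn, one_smul]

theorem commute_pow_left_of_mul_eq_smul {r : K} {x y : A} (h : x * y = r • (y * x)) {n : ℕ}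
    (hn : r ^ n = 1) : Commute (x ^ n) y := by
  simpa only [← op_pow, commute_op] using
    (commute_pow_right_of_mul_eq_smul
      (show op y * op x = r • (op x * op y) from congrArg MulOpposite.op h) hn).symm

/-- The defining relations of `A_q(M₂)` for `(a, b, c, d) = (u11, u12, u21, u22)` and `r = q²`. -/
structure IsREAQuadruple (r : K) (a b c d : A) : Prop where
  a_d : a * d = d * a
  d_b : d * b = r • (b * d)
  c_d : c * d = r • (d * c)
  a_b : a * b = b * a + (r⁻¹ - 1) • (b * d)
  c_a : c * a = a * c + (r⁻¹ - 1) • (d * c)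
  c_b : c * b = b * c + (r⁻¹ - 1) • (d * (d - a))

namespace IsREAQuadruple

variable {r : K} {a b c d : A}

theorem op (h : IsREAQuadruple r a b c d) :
    IsREAQuadruple r (op a) (op c) (op b) (op d) where
  a_d := congrArg MulOpposite.op h.a_d.symm
  d_b := congrArg MulOpposite.op h.c_d
  c_d := congrArg MulOpposite.op h.d_b
  a_b := congrArg MulOpposite.op h.c_a
  c_a := congrArg MulOpposite.op h.a_b
  c_b := congrArg MulOpposite.op <|
    show c * b = b * c + (r⁻¹ - 1) • ((d - a) * d) by rw [h.c_b, mul_sub, sub_mul, h.a_d]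

theorem a_mul_b_pow (h : IsREAQuadruple r a b c d) (hr : r ≠ 0) (k : ℕ) :
    a * b ^ k = b ^ k * a + (r⁻¹ * (1 - r ^ k)) • (b ^ k * d) := by
  induction k with
  | zero => simp
  | succ k ih =>
    rw [pow_succ, ← mul_assoc, ih, add_mul, mul_assoc, h.a_b, smul_mul_assoc, mul_assoc, h.d_b,
      mul_add, mul_smul_comm, mul_smul_comm, smul_smul, ← mul_assoc, ← mul_assoc, ← pow_succ,
      add_assoc, ← add_smul]
    congr 2
    field_simp
    ring

theorem c_mul_b_pow_succ (h : IsREAQuadruple r a b c d) (hr : r ≠ 0) (k : ℕ) :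
    c * b ^ (k + 1) = b ^ (k + 1) * c
      + (r⁻¹ * (1 - r ^ (k + 1))) • (b ^ k * (r ^ k • (d * d) - d * a)) := by
  have hdd : d * d * b = b * (r ^ 2 • (d * d)) := by
    rw [mul_assoc, h.d_b, mul_smul_comm, ← mul_assoc, h.d_b, smul_mul_assoc, smul_smul, mul_assoc,
      ← sq, mul_smul_comm]
  have hda : d * a * b = b * (r • (d * a) + (1 - r) • (d * d)) := by
    rw [mul_assoc, h.a_b, mul_add, ← mul_assoc, h.d_b, mul_smul_comm, ← mul_assoc, h.d_b,
      smul_mul_assoc, smul_mul_assoc, mul_assoc, mul_assoc, smul_smul, mul_add, mul_smul_comm,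
      mul_smul_comm]
    congr 2
    field_simp
  induction k with
  | zero =>
    rw [zero_add, pow_one, pow_zero, pow_zero, one_smul, one_mul, h.c_b, mul_sub]
    congr 2
    field_simp
  | succ k ih =>
    rw [pow_succ b (k + 1), ← mul_assoc, ih, add_mul, smul_mul_assoc, mul_assoc, mul_assoc, h.c_b,
      sub_mul, smul_mul_assoc, hdd, hda]
    simp only [mul_add, mul_sub, mul_smul_comm, smul_add, smul_sub, smul_smul, ← mul_assoc,
      ← pow_succ]
    match_scalars <;> field_simp <;> ring

theorem commute_b_pow (h : IsREAQuadruple r a b c d) (hr : r ≠ 0) {n : ℕ} (hn : r ^ n = 1) :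
    Commute (b ^ n) a ∧ Commute (b ^ n) c ∧ Commute (b ^ n) d := by
  refine ⟨?_, ?_, ?_⟩
  · simpa [Commute, SemiconjBy, hn] using (h.a_mul_b_pow hr n).symm
  · obtain _ | k := n
    · simp
    · simpa [Commute, SemiconjBy, hn] using (h.c_mul_b_pow_succ hr k).symm
  · exact (commute_pow_right_of_mul_eq_smul h.d_b hn).symm

theorem commute_c_pow (h : IsREAQuadruple r a b c d) (hr : r ≠ 0) {n : ℕ} (hn : r ^ n = 1) :
    Commute (c ^ n) a ∧ Commute (c ^ n) b ∧ Commute (c ^ n) d := by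
  simpa only [← op_pow, commute_op, and_comm] using h.op.commute_b_pow hr hn

theorem commute_d_pow (h : IsREAQuadruple r a b c d) {n : ℕ} (hn : r ^ n = 1) :
    Commute (d ^ n) a ∧ Commute (d ^ n) b ∧ Commute (d ^ n) c :=
  ⟨Commute.pow_left h.a_d.symm n, commute_pow_left_of_mul_eq_smul h.d_b hn,
    (commute_pow_right_of_mul_eq_smul h.c_d hn).symm⟩

end IsREAQuadruple

end Relations

theorem isREAQuadruple_generators (q : K) :
    IsREAQuadruple (q ^ 2) (u11 q) (u12 q) (u21 q) (u22 q) where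
  a_d := by simpa only [u11, u22, map_mul] using RingQuot.mkAlgHom_rel K (REArel.r1 (q := q))
  d_b := by
    simpa only [u12, u22, map_mul, map_smul] using RingQuot.mkAlgHom_rel K (REArel.r2 (q := q))
  c_d := by
    simpa only [u21, u22, map_mul, map_smul] using RingQuot.mkAlgHom_rel K (REArel.r3 (q := q))
  a_b := by
    simpa only [u11, u12, u22, map_mul, map_add, map_smul, mul_add, mul_smul_comm, inv_pow] using
      RingQuot.mkAlgHom_rel K (REArel.r4 (q := q))
  c_a := by
    simpa only [u11, u21, u22, map_mul, map_add, map_smul, add_mul, smul_mul_assoc, inv_pow] using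
      RingQuot.mkAlgHom_rel K (REArel.r5 (q := q))
  c_b := by
    simpa only [u11, u12, u21, u22, map_mul, map_add, map_sub, map_smul, inv_pow] using
      RingQuot.mkAlgHom_rel K (REArel.r6 (q := q))

theorem REA.commute_of_commute_generators {q : K} {g : REA q} (h11 : Commute g (u11 q))
    (h12 : Commute g (u12 q)) (h21 : Commute g (u21 q)) (h22 : Commute g (u22 q)) (x : REA q) :
    Commute g x := by
  obtain ⟨y, rfl⟩ := RingQuot.mkAlgHom_surjective K (REArel q) x
  induction y using FreeAlgebra.induction with
  | grade0 k => simpa only [AlgHom.commutes] using Algebra.commute_algebraMap_right k g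
  | grade1 i => fin_cases i <;> assumption
  | mul y z hy hz => simpa only [map_mul] using hy.mul_right hz
  | add y z hy hz => simpa only [map_add] using hy.add_right hz

theorem REA_pow_n_central_general (q : K) (hq : q ≠ 0) (m n : ℕ)
    (hq1 : q ^ m = 1)
    (hn : n = if Odd m then m else m / 2) :
    (∀ x : REA q, u12 q ^ n * x = x * u12 q ^ n) ∧
    (∀ x : REA q, u21 q ^ n * x = x * u21 q ^ n) ∧
    (∀ x : REA q, u22 q ^ n * x = x * u22 q ^ n) := by
  have hqn : (q ^ 2) ^ n = 1 := by
    split_ifs at hn with hm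
    · rw [hn, ← pow_mul, mul_comm, pow_mul, hq1, one_pow]
    · rw [hn, ← pow_mul, Nat.mul_div_cancel' (Nat.not_odd_iff_even.mp hm).two_dvd, hq1]
  have h := isREAQuadruple_generators q
  obtain ⟨h12_11, h12_21, h12_22⟩ := h.commute_b_pow (pow_ne_zero 2 hq) hqn
  obtain ⟨h21_11, h21_12, h21_22⟩ := h.commute_c_pow (pow_ne_zero 2 hq) hqn
  obtain ⟨h22_11, h22_12, h22_21⟩ := h.commute_d_pow hqn
  exact ⟨fun x => (REA.commute_of_commute_generators h12_11 (.pow_self _ n) h12_21 h12_22 x).eq,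
    fun x => (REA.commute_of_commute_generators h21_11 h21_12 (.pow_self _ n) h21_22 x).eq,
    fun x => (REA.commute_of_commute_generators h22_11 h22_12 h22_21 (.pow_self _ n) x).eq⟩

/-- Let `q` be a primitive `m`-th root of unity in `K` and set `n = m`
if `m` is odd and `n = m/2` if `m` is even. Then `u12^n`, `u21^n` and `u22^n` are central
in `A_q(M₂)`. -/
theorem REA_pow_n_central (q : K) (hq : q ≠ 0) (m n : ℕ)
    (hq1 : q ^ m = 1) (hq2 : ∀ k : ℕ, 1 ≤ k → k < m → q ^ k ≠ 1)
    (hn : n = if Odd m then m else m / 2) :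
    (∀ x : REA q, u12 q ^ n * x = x * u12 q ^ n) ∧
    (∀ x : REA q, u21 q ^ n * x = x * u21 q ^ n) ∧
    (∀ x : REA q, u22 q ^ n * x = x * u22 q ^ n) :=
  REA_pow_n_central_general q hq m n hq1 hn
end
end

section
/- Let q be a primitive m-th root of unity in K, set n = m if m is odd and n = m/2 if m is even, and let N be a finite-dimensional simple right A_q(M₂)-module such that u22 acts injectively on N and the central element u21^n acts on N as multiplication by a nonzero scalar β. Then dim_K N = n; indeed, for any common eigenvector v of u11, u22, u12·u21, u12^n, u21^n in N, the vectors v, v·u21, …, v·u21^{n−1} form a K-basis of N. -/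
/-!
Take a common eigenvector `v` of the commuting operators `u11`, `u22`, `u12·u21` (it exists since
`N` is finite-dimensional over an algebraically closed field). The commutation relations make
`v·u21^r` an eigenvector of `u22` with eigenvalue `q^{2r}·δ`, where `δ ≠ 0` as `u22` acts
injectively; since `q²` is a primitive `n`-th root of unity these eigenvalues are distinct for
`r < n`, and the vectors are nonzero because `v·u21^n = β·v`. Their span is stable under `u11` and
`u22`, under `u21` (which raises `r`, the top vector going to `β·v`) and under `u12` (which lowers
`r`, with `v·u12 = β⁻¹·v·u21^n·u12`), so it is all of `N` by simplicity.
-/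

noncomputable section

open FreeAlgebra MulOpposite

variable {K : Type*} [Field K]

open Module

lemma IsPrimitiveRoot.sq {M : Type*} [CommMonoid M] {ζ : M} {m : ℕ}
    (h : IsPrimitiveRoot ζ m) (hm : 0 < m) :
    IsPrimitiveRoot (ζ ^ 2) (if Odd m then m else m / 2) := by
  split_ifs with hodd
  · exact h.pow_of_coprime 2 (Nat.coprime_two_left.mpr hodd)
  · exact h.pow hm (Nat.two_mul_div_two_of_even (Nat.not_odd_iff_even.mp hodd)).symm

lemma Module.End.exists_not_disjoint_eigenspace {F V : Type*} [Field F] [IsAlgClosed F]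
    [AddCommGroup V] [Module F V] [FiniteDimensional F V] {f : End F V} {p : Submodule F V}
    (hp : p ≠ ⊥) (hfp : ∀ x ∈ p, f x ∈ p) : ∃ μ, ¬Disjoint (f.eigenspace μ) p := by
  have : Nontrivial p := Submodule.nontrivial_iff_ne_bot.mpr hp
  obtain ⟨μ, hμ⟩ := exists_eigenvalue (f.restrict hfp)
  exact ⟨μ, fun h => hμ (eigenspace_restrict_eq_bot hfp h)⟩

lemma Module.End.exists_common_eigenvector {F V : Type*} [Field F] [IsAlgClosed F]
    [AddCommGroup V] [Module F V] [FiniteDimensional F V] [Nontrivial V] {f g h : End F V}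
    (hfg : Commute f g) (hfh : Commute f h) (hgh : Commute g h) :
    ∃ v ≠ 0, (∃ a : F, f v = a • v) ∧ (∃ b : F, g v = b • v) ∧ (∃ c : F, h v = c • v) := by
  obtain ⟨a, ha⟩ := exists_not_disjoint_eigenspace (f := f) top_ne_bot fun _ _ => trivial
  obtain ⟨b, hb⟩ := exists_not_disjoint_eigenspace (f := g) (p := f.eigenspace a)
    (fun hbot => ha (by simp [hbot])) (mapsTo_genEigenspace_of_comm hfg a 1)
  obtain ⟨c, hc⟩ := exists_not_disjoint_eigenspace (f := h) (p := g.eigenspace b ⊓ f.eigenspace a)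
    (fun hbot => hb (disjoint_iff.mpr hbot)) fun x hx =>
      ⟨mapsTo_genEigenspace_of_comm hgh b 1 hx.1, mapsTo_genEigenspace_of_comm hfh a 1 hx.2⟩
  rw [Submodule.disjoint_def] at hc
  push Not at hc
  obtain ⟨v, hvc, ⟨hvb, hva⟩, hv⟩ := hc
  exact ⟨v, hv, ⟨a, mem_eigenspace_iff.mp hva⟩, ⟨b, mem_eigenspace_iff.mp hvb⟩,
    ⟨c, mem_eigenspace_iff.mp hvc⟩⟩

section Relations

variable (q : K)

lemma commute_u11_u22 : Commute (u11 q) (u22 q) := by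
  simpa only [Commute, SemiconjBy, u11, u22, map_mul]
    using RingQuot.mkAlgHom_rel K (REArel.r1 (q := q))

lemma u21_mul_u22 : u21 q * u22 q = q ^ 2 • (u22 q * u21 q) := by
  simpa only [u21, u22, map_mul, map_smul] using RingQuot.mkAlgHom_rel K (REArel.r3 (q := q))

lemma u22_mul_u12 : u22 q * u12 q = q ^ 2 • (u12 q * u22 q) := by
  simpa only [u12, u22, map_mul, map_smul] using RingQuot.mkAlgHom_rel K (REArel.r2 (q := q))

lemma u11_mul_u12 : u11 q * u12 q = u12 q * (u11 q + (q⁻¹ ^ 2 - 1) • u22 q) := by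
  simpa only [u11, u12, u22, map_mul, map_add, map_smul]
    using RingQuot.mkAlgHom_rel K (REArel.r4 (q := q))

lemma u21_mul_u11 : u21 q * u11 q = (u11 q + (q⁻¹ ^ 2 - 1) • u22 q) * u21 q := by
  simpa only [u11, u21, u22, map_mul, map_add, map_smul]
    using RingQuot.mkAlgHom_rel K (REArel.r5 (q := q))

lemma u21_mul_u12 :
    u21 q * u12 q = u12 q * u21 q + (q⁻¹ ^ 2 - 1) • (u22 q * (u22 q - u11 q)) := by
  simpa only [u11, u12, u21, u22, map_mul, map_add, map_sub, map_smul]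
    using RingQuot.mkAlgHom_rel K (REArel.r6 (q := q))

lemma commute_u11_u12_mul_u21 : Commute (u11 q) (u12 q * u21 q) := by
  rw [Commute, SemiconjBy, ← mul_assoc, u11_mul_u12, mul_assoc, ← u21_mul_u11, mul_assoc]

lemma commute_u22_u12_mul_u21 : Commute (u22 q) (u12 q * u21 q) := by
  rw [Commute, SemiconjBy, ← mul_assoc, u22_mul_u12, smul_mul_assoc, mul_assoc, mul_assoc,
    u21_mul_u22, mul_smul_comm]

end Relations

section RightModule

variable {q : K} {N : Type*} [AddCommGroup N] [Module K N] [Module (REA q)ᵐᵒᵖ N]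
  [IsScalarTower K (REA q)ᵐᵒᵖ N] {x : N} {a d : K}

lemma u22_smul_u21_smul (hd : op (u22 q) • x = d • x) :
    op (u22 q) • op (u21 q) • x = (q ^ 2 * d) • op (u21 q) • x := by
  rw [← mul_smul, ← op_mul, u21_mul_u22, op_smul, smul_assoc, op_mul, mul_smul, hd,
    smul_comm (op (u21 q)) d x, smul_smul]

lemma u11_smul_u21_smul (ha : op (u11 q) • x = a • x) (hd : op (u22 q) • x = d • x) :
    op (u11 q) • op (u21 q) • x = (a + (q⁻¹ ^ 2 - 1) * d) • op (u21 q) • x := by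
  rw [← mul_smul, ← op_mul, u21_mul_u11, op_mul, mul_smul, op_add, add_smul, op_smul,
    smul_assoc, ha, hd, smul_smul, ← add_smul, smul_comm]

lemma u12_smul_u21_smul (ha : op (u11 q) • x = a • x) (hd : op (u22 q) • x = d • x) :
    op (u12 q) • op (u21 q) • x =
      op (u21 q) • op (u12 q) • x + ((q⁻¹ ^ 2 - 1) * (d * (d - a))) • x := by
  rw [← mul_smul, ← op_mul, u21_mul_u12]
  simp only [op_add, op_mul, op_sub, op_smul, add_smul, mul_smul, sub_smul, smul_assoc, hd]
  rw [smul_comm _ d x, smul_comm _ d x, ha, hd]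
  congr 1
  module

end RightModule

section Orbit

variable {q : K} {N : Type*} [AddCommGroup N] [Module K N] [Module (REA q)ᵐᵒᵖ N]
  [IsScalarTower K (REA q)ᵐᵒᵖ N] {v : N} {α δ μ : K}

lemma u22_smul_u21_pow_smul (hδ : op (u22 q) • v = δ • v) (r : ℕ) :
    op (u22 q) • op (u21 q ^ r) • v = (q ^ (2 * r) * δ) • op (u21 q ^ r) • v := by
  induction r with
  | zero => simpa using hδ
  | succ r ih =>
    rw [pow_succ, op_mul, mul_smul, u22_smul_u21_smul ih, ← mul_assoc, ← pow_add,
      add_comm, mul_add_one]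

lemma exists_u11_smul_u21_pow_smul (hα : op (u11 q) • v = α • v)
    (hδ : op (u22 q) • v = δ • v) (r : ℕ) :
    ∃ c : K, op (u11 q) • op (u21 q ^ r) • v = c • op (u21 q ^ r) • v := by
  induction r with
  | zero => exact ⟨α, by simpa using hα⟩
  | succ r ih =>
    obtain ⟨c, hc⟩ := ih
    rw [pow_succ, op_mul, mul_smul]
    exact ⟨_, u11_smul_u21_smul hc (u22_smul_u21_pow_smul hδ r)⟩

lemma exists_u12_smul_u21_pow_succ_smul (hα : op (u11 q) • v = α • v)
    (hδ : op (u22 q) • v = δ • v) (hμ : op (u12 q * u21 q) • v = μ • v) (r : ℕ) :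
    ∃ c : K, op (u12 q) • op (u21 q ^ (r + 1)) • v = c • op (u21 q ^ r) • v := by
  induction r with
  | zero =>
    rw [op_mul, mul_smul] at hμ
    simp only [zero_add, pow_one, pow_zero, op_one, one_smul]
    exact ⟨_, by rw [u12_smul_u21_smul hα hδ, hμ, ← add_smul]⟩
  | succ r ih =>
    obtain ⟨c, hc⟩ := ih
    obtain ⟨a, ha⟩ := exists_u11_smul_u21_pow_smul hα hδ (r + 1)
    rw [pow_succ _ (r + 1), op_mul, mul_smul, u12_smul_u21_smul ha (u22_smul_u21_pow_smul hδ _),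
      hc, smul_comm, ← mul_smul, ← op_mul, ← pow_succ, ← add_smul]
    exact ⟨_, rfl⟩

end Orbit

section Generators

variable {q : K} {N : Type*} [AddCommGroup N] [Module K N] [Module (REA q)ᵐᵒᵖ N]
  [IsScalarTower K (REA q)ᵐᵒᵖ N]

lemma Submodule.smul_mem_of_generators {W : Submodule K N}
    (h11 : ∀ w ∈ W, op (u11 q) • w ∈ W) (h12 : ∀ w ∈ W, op (u12 q) • w ∈ W)
    (h21 : ∀ w ∈ W, op (u21 q) • w ∈ W) (h22 : ∀ w ∈ W, op (u22 q) • w ∈ W)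
    (x : REA q) : ∀ w ∈ W, op x • w ∈ W := by
  obtain ⟨y, rfl⟩ := RingQuot.mkAlgHom_surjective K (REArel q) x
  induction y using FreeAlgebra.induction with
  | grade0 k =>
    intro w hw
    rw [AlgHom.commutes, ← MulOpposite.algebraMap_apply, algebraMap_smul]
    exact W.smul_mem k hw
  | grade1 i => fin_cases i <;> assumption
  | mul x y ihx ihy =>
    intro w hw
    rw [map_mul, op_mul, mul_smul]
    exact ihy _ (ihx _ hw)
  | add x y ihx ihy =>
    intro w hw
    rw [map_add, op_add, add_smul]
    exact W.add_mem (ihx _ hw) (ihy _ hw)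

lemma Submodule.eq_top_of_generators [IsSimpleModule (REA q)ᵐᵒᵖ N] {W : Submodule K N}
    (hW : W ≠ ⊥)
    (h11 : ∀ w ∈ W, op (u11 q) • w ∈ W) (h12 : ∀ w ∈ W, op (u12 q) • w ∈ W)
    (h21 : ∀ w ∈ W, op (u21 q) • w ∈ W) (h22 : ∀ w ∈ W, op (u22 q) • w ∈ W) : W = ⊤ := by
  let W' : Submodule (REA q)ᵐᵒᵖ N :=
    { W.toAddSubmonoid with
      smul_mem' := fun x w hw => W.smul_mem_of_generators h11 h12 h21 h22 x.unop w hw }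
  have hW' : W'.restrictScalars K = W := rfl
  rw [← hW', Submodule.restrictScalars_eq_top_iff]
  rw [← hW', Ne, Submodule.restrictScalars_eq_bot_iff] at hW
  exact (eq_bot_or_eq_top W').resolve_left hW

end Generators

section Basis

variable {q : K} {N : Type*} [AddCommGroup N] [Module K N] [Module (REA q)ᵐᵒᵖ N]
  {n : ℕ} {v : N} {β : K}

lemma u21_pow_smul_ne_zero (hv : v ≠ 0) (hβ : β ≠ 0) (hvn : op (u21 q ^ n) • v = β • v)
    {r : ℕ} (hr : r ≤ n) : op (u21 q ^ r) • v ≠ 0 := by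
  intro h0
  have : op (u21 q ^ n) • v = 0 := by
    rw [← Nat.add_sub_cancel' hr, pow_add, op_mul, mul_smul, h0, smul_zero]
  exact hv ((smul_eq_zero.mp (hvn ▸ this)).resolve_left hβ)

variable [IsScalarTower K (REA q)ᵐᵒᵖ N]

lemma linearIndependent_u21_pow_smul (hq : IsPrimitiveRoot (q ^ 2) n)
    (hu22 : Function.Injective fun x : N => op (u22 q) • x) (hv : v ≠ 0) (hβ : β ≠ 0)
    (hvn : op (u21 q ^ n) • v = β • v) {δ : K} (hδ : op (u22 q) • v = δ • v) :
    LinearIndependent K fun r : Fin n => op (u21 q ^ (r : ℕ)) • v := by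
  have hδ0 : δ ≠ 0 := by
    rintro rfl
    exact hv (hu22 (by simpa using hδ))
  refine End.eigenvectors_linearIndependent' (toModuleEnd K (S := (REA q)ᵐᵒᵖ) N (op (u22 q)))
    (fun r : Fin n => q ^ (2 * (r : ℕ)) * δ) ?_ _ fun r => ⟨?_, ?_⟩
  · intro r s hrs
    simp only [pow_mul, mul_left_inj' hδ0] at hrs
    exact Fin.ext (hq.pow_inj r.2 s.2 hrs)
  · exact End.mem_eigenspace_iff.mpr (u22_smul_u21_pow_smul hδ r)
  · exact u21_pow_smul_ne_zero hv hβ hvn r.2.le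

lemma span_u21_pow_smul_eq_top [IsSimpleModule (REA q)ᵐᵒᵖ N] (hn : 0 < n) (hv : v ≠ 0)
    (hβ : β ≠ 0) (hvn : op (u21 q ^ n) • v = β • v) {α δ μ : K} (hα : op (u11 q) • v = α • v)
    (hδ : op (u22 q) • v = δ • v) (hμ : op (u12 q * u21 q) • v = μ • v) :
    Submodule.span K (Set.range fun r : Fin n => op (u21 q ^ (r : ℕ)) • v) = ⊤ := by
  set W := Submodule.span K (Set.range fun r : Fin n => op (u21 q ^ (r : ℕ)) • v)
  have hmem {r : ℕ} (hr : r < n) : op (u21 q ^ r) • v ∈ W :=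
    Submodule.subset_span ⟨⟨r, hr⟩, rfl⟩
  have hW {x : REA q} (h : ∀ r < n, op x • op (u21 q ^ r) • v ∈ W) : ∀ w ∈ W, op x • w ∈ W := by
    refine fun w hw => Submodule.span_le (p := W.comap (toModuleEnd K N (op x))).mpr ?_ hw
    rintro _ ⟨r, rfl⟩
    exact h r r.2
  have hvW : v ∈ W := by simpa using hmem hn
  refine Submodule.eq_top_of_generators (W.ne_bot_iff.mpr ⟨v, hvW, hv⟩)
    (hW fun r hr => ?_) (hW fun r hr => ?_) (hW fun r hr => ?_) (hW fun r hr => ?_)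
  · obtain ⟨c, hc⟩ := exists_u11_smul_u21_pow_smul hα hδ r
    exact hc ▸ W.smul_mem c (hmem hr)
  · rcases r with _ | s
    · obtain ⟨c, hc⟩ := exists_u12_smul_u21_pow_succ_smul hα hδ hμ (n - 1)
      rw [Nat.sub_add_cancel hn, hvn, smul_comm] at hc
      have hv12 : op (u12 q) • v = (β⁻¹ * c) • op (u21 q ^ (n - 1)) • v := by
        rw [mul_smul, ← hc, inv_smul_smul₀ hβ]
      simpa only [pow_zero, op_one, one_smul, hv12] using W.smul_mem _ (hmem (by omega))
    · obtain ⟨c, hc⟩ := exists_u12_smul_u21_pow_succ_smul hα hδ hμ s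
      exact hc ▸ W.smul_mem c (hmem (by omega))
  · rw [← mul_smul, ← op_mul, ← pow_succ]
    rcases (Nat.succ_le_of_lt hr).lt_or_eq with hlt | rfl
    · exact hmem hlt
    · exact hvn ▸ W.smul_mem β hvW
  · rw [u22_smul_u21_pow_smul hδ]
    exact W.smul_mem _ (hmem hr)

end Basis

lemma exists_basis_u21_pow_smul {q : K} {N : Type*} [AddCommGroup N] [Module K N]
    [Module (REA q)ᵐᵒᵖ N] [IsScalarTower K (REA q)ᵐᵒᵖ N] [IsSimpleModule (REA q)ᵐᵒᵖ N]
    {n : ℕ} (hn : 0 < n) (hq : IsPrimitiveRoot (q ^ 2) n)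
    (hu22 : Function.Injective fun x : N => op (u22 q) • x) {β : K} (hβ : β ≠ 0) {v : N}
    (hv : v ≠ 0) (hvn : op (u21 q ^ n) • v = β • v) (h11 : ∃ c : K, op (u11 q) • v = c • v)
    (h22 : ∃ c : K, op (u22 q) • v = c • v) (h1221 : ∃ c : K, op (u12 q * u21 q) • v = c • v) :
    ∃ b : Basis (Fin n) K N, ∀ r : Fin n, b r = op (u21 q ^ (r : ℕ)) • v := by
  obtain ⟨α, hα⟩ := h11
  obtain ⟨δ, hδ⟩ := h22
  obtain ⟨μ, hμ⟩ := h1221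
  have hli := linearIndependent_u21_pow_smul hq hu22 hv hβ hvn hδ
  have hsp := span_u21_pow_smul_eq_top hn hv hβ hvn hα hδ hμ
  exact ⟨.mk hli hsp.ge, Basis.mk_apply hli hsp.ge⟩

/-- Let `q` be a primitive `m`-th root of unity, `n = m` for `m` odd and
`n = m/2` for `m` even, and let `N` be a finite-dimensional simple right `A_q(M₂)`-module
on which `u22` acts injectively and on which the central element `u21^n` acts as
multiplication by a nonzero scalar `β`. Then `dim_K N = n`, and for every common
eigenvector `v` of `u11, u22, u12·u21, u12^n, u21^n` the vectors `v, v·u21, …, v·u21^{n−1}`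
form a `K`-basis of `N`. -/
theorem REA_simple_u22torsionfree_u21_nonnilpotent_dim
    [IsAlgClosed K] (q : K) (m n : ℕ) (hm : 0 < m)
    (hq1 : q ^ m = 1) (hq2 : ∀ k : ℕ, 1 ≤ k → k < m → q ^ k ≠ 1)
    (hn : n = if Odd m then m else m / 2)
    (N : Type*) [AddCommGroup N] [Module K N] [Module (REA q)ᵐᵒᵖ N]
    [IsScalarTower K (REA q)ᵐᵒᵖ N] [IsSimpleModule (REA q)ᵐᵒᵖ N]
    [FiniteDimensional K N]
    (hu22 : Function.Injective fun x : N => op (u22 q) • x)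
    (β : K) (hβ : β ≠ 0) (hu21n : ∀ x : N, op (u21 q ^ n) • x = β • x) :
    Module.finrank K N = n ∧
    ∀ v : N, v ≠ 0 →
      (∃ c : K, op (u11 q) • v = c • v) → (∃ c : K, op (u22 q) • v = c • v) →
      (∃ c : K, op (u12 q * u21 q) • v = c • v) → (∃ c : K, op (u12 q ^ n) • v = c • v) →
      (∃ c : K, op (u21 q ^ n) • v = c • v) →
      ∃ b : Module.Basis (Fin n) K N, ∀ r : Fin n, b r = op (u21 q ^ (r : ℕ)) • v := by
  have hq : IsPrimitiveRoot (q ^ 2) n :=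
    hn ▸ (IsPrimitiveRoot.mk_of_lt q hm hq1 fun l hl => hq2 l hl).sq hm
  have hn0 : 0 < n := by
    split_ifs at hn with hodd
    · omega
    · obtain ⟨k, rfl⟩ := Nat.not_odd_iff_even.mp hodd
      omega
  have hbasis (v : N) (hv : v ≠ 0) := exists_basis_u21_pow_smul hn0 hq hu22 hβ hv (hu21n v)
  have : Nontrivial N := IsSimpleModule.nontrivial (REA q)ᵐᵒᵖ N
  let ρ := toModuleEnd K (S := (REA q)ᵐᵒᵖ) N
  obtain ⟨v, hv, h11, h22, h1221⟩ := End.exists_common_eigenvector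
    ((commute_u11_u22 q).op.map ρ) ((commute_u11_u12_mul_u21 q).op.map ρ)
    ((commute_u22_u12_mul_u21 q).op.map ρ)
  obtain ⟨b, -⟩ := hbasis v hv h11 h22 h1221
  exact ⟨finrank_eq_card_basis b |>.trans (Fintype.card_fin n),
    fun v hv h11 h22 h1221 _ _ => hbasis v hv h11 h22 h1221⟩
end
end
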